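/- For every ℓ ∈ ℕ one has 1 + 4ℓ(ℓ+1) = (2ℓ+1)², so that for spacetime dimension n = 4 the parameter ν = (−1 + √(1 + 4ℓ² + 4ℓ(n−3)))/2 equals ℓ for every ℓ ∈ ℕ. Conversely, for every integer n > 4 there exists ℓ ∈ ℕ such that 1 + 4ℓ(ℓ+n−3) is not a perfect square (so that ν is not an integer for that ℓ). Hence n = 4 is the only dimension n ≥ 4 for which ν ∈ ℤ for all ℓ ∈ ℕ. -/
import Mathlib

lemma aux_notsq : ∀ n : ℕ, 4 < n → ∃ ℓ : ℕ, ¬ ∃ k : ℕ, 1 + 4 * ℓ * (ℓ + n - 3) = k ^ 2 := by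
  intro n hn
  obtain ⟨d, rfl⟩ : ∃ d, n = d + 5 := ⟨n - 5, by omega⟩
  refine ⟨(d + 1) ^ 2, ?_⟩
  rintro ⟨k, hk⟩
  set L : ℕ := (d + 1) ^ 2 with hL
  have hsub : L + (d + 5) - 3 = L + d + 2 := by omega
  rw [hsub] at hk
  have hk' : (1 : ℤ) + 4 * L * (L + d + 2) = (k : ℤ) ^ 2 := by exact_mod_cast hk
  have hLZ : (L : ℤ) = ((d : ℤ) + 1) ^ 2 := by exact_mod_cast hL
  have h1 : 2 * (L : ℤ) + d + 1 < (k : ℤ) := by nlinarith [sq_nonneg ((k : ℤ) - (2*(L:ℤ)+d+1)), sq_nonneg ((k:ℤ) + (2*(L:ℤ)+d+1)), Int.natCast_nonneg k]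
  have h2 : (k : ℤ) < 2 * (L : ℤ) + d + 2 := by nlinarith [Int.natCast_nonneg k]
  omega

/-- for every `ℓ`, `1 + 4ℓ(ℓ+1) = (2ℓ+1)²`; hence for `n = 4` the
parameter `ν = (-1 + √(1 + 4ℓ² + 4ℓ(n-3)))/2` equals `ℓ` for all `ℓ`.  Conversely for
every `n > 4` there is an `ℓ` with `1 + 4ℓ(ℓ+n-3)` not a perfect square, so `n = 4` is
the only dimension `n ≥ 4` for which `ν` is an integer for all `ℓ`. -/
theorem stmt_2 :
    (∀ ℓ : ℕ, 1 + 4 * ℓ * (ℓ + 1) = (2 * ℓ + 1) ^ 2) ∧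
    (∀ ℓ : ℕ,
      (-1 + Real.sqrt (1 + 4 * (ℓ : ℝ) ^ 2 + 4 * (ℓ : ℝ) * ((4 : ℝ) - 3))) / 2 = (ℓ : ℝ)) ∧
    (∀ n : ℕ, 4 < n → ∃ ℓ : ℕ, ¬ ∃ k : ℕ, 1 + 4 * ℓ * (ℓ + n - 3) = k ^ 2) ∧
    (∀ n : ℕ, 4 ≤ n →
      (∀ ℓ : ℕ, ∃ m : ℤ,
        (-1 + Real.sqrt (1 + 4 * (ℓ : ℝ) ^ 2 + 4 * (ℓ : ℝ) * ((n : ℝ) - 3))) / 2 = (m : ℝ)) →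
      n = 4) := by
  refine ⟨fun ℓ => by ring, ?_, aux_notsq, ?_⟩
  · intro ℓ
    have h : (1 + 4 * (ℓ : ℝ) ^ 2 + 4 * (ℓ : ℝ) * ((4 : ℝ) - 3)) = (2 * ℓ + 1) ^ 2 := by ring
    rw [h, Real.sqrt_sq (by positivity)]
    ring
  · intro n hn h
    by_contra h4
    have hn5 : 4 < n := by omega
    obtain ⟨ℓ, hℓ⟩ := aux_notsq n hn5
    obtain ⟨m, hm⟩ := h ℓ
    set S : ℝ := 1 + 4 * (ℓ : ℝ) ^ 2 + 4 * (ℓ : ℝ) * ((n : ℝ) - 3) with hS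
    have hS0 : 0 ≤ S := by
      have h3 : (3 : ℝ) ≤ (n : ℝ) := by exact_mod_cast (by omega : 3 ≤ n)
      nlinarith [sq_nonneg (ℓ : ℝ), Nat.cast_nonneg (α := ℝ) ℓ]
    have hsqrt : Real.sqrt S = 2 * (m : ℝ) + 1 := by linarith [hm]
    have hSeq : S = (2 * (m : ℝ) + 1) ^ 2 := by
      rw [← hsqrt, Real.sq_sqrt hS0]
    have hm0 : 0 ≤ m := by
      by_contra hc
      have hm1 : m ≤ -1 := by omega
      have : (m : ℝ) ≤ -1 := by exact_mod_cast hm1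
      have h0 : (0 : ℝ) ≤ 2 * (m : ℝ) + 1 := hsqrt ▸ Real.sqrt_nonneg S
      linarith
    set k : ℕ := m.toNat with hkdef
    have hmk : (m : ℝ) = (k : ℝ) := by
      have := Int.toNat_of_nonneg hm0
      exact_mod_cast this.symm
    apply hℓ
    refine ⟨2 * k + 1, ?_⟩
    have hsub : (ℓ + n - 3 : ℕ) = ℓ + (n - 3) := by omega
    have hcast : ((n - 3 : ℕ) : ℝ) = (n : ℝ) - 3 := by
      push_cast [Nat.cast_sub (by omega : 3 ≤ n)]; ring
    have : (1 + 4 * ℓ * (ℓ + (n - 3)) : ℕ) = ((2 * k + 1) ^ 2 : ℕ) := by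
      have := hSeq
      rw [hS] at this
      have : (1 + 4 * (ℓ:ℝ) * ((ℓ:ℝ) + ((n - 3 : ℕ) : ℝ))) = ((2 * (k:ℝ) + 1) ^ 2) := by
        rw [hcast]; push_cast at this ⊢; nlinarith [this, hmk]
      exact_mod_cast this
    rw [hsub]; exact this
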